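/- arXiv:1003.1740 — 3 statements merged into one kernel-verified Lean document; each statement's English description precedes it below -/
import Mathlib

section
/- Suppose A is strictly T-monotone, u solves the bilateral obstacle problem on K_ψ^φ with forcing L, and there exists Λ ∈ V' with Λ ≥ L and Λ ≥ Aψ. Then Au ≤ Λ in V'. (Upper Lewy–Stampacchia bound in abstract form.) -/
/-!
Let `z` be the solution of the one-sided problem with obstacle `u` and forcing `Λ`.
Testing its inequality with `z ⊔ ψ` and using `Aψ ≤ Λ`, strict T-monotonicity forces
`(ψ - z)⁺ = 0`, i.e. `ψ ≤ z ≤ u`. Then `z` is admissible for the bilateral problem, and adding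
the two inequalities tested with `z` and `u` respectively, together with `L ≤ Λ`, forces
`(u - z)⁺ = 0`, so `z = u`. Finally testing the one-sided problem solved by `u` with `u - w`
gives `Au ≤ Λ`.
-/

section ObstacleProblem

variable {V : Type*} [Lattice V] [AddCommGroup V] [Module ℝ V]

def IsStrictlyTMonotone (A : V → V →ₗ[ℝ] ℝ) : Prop :=
  ∀ u v : V, (u - v) ⊔ 0 ≠ 0 → 0 < A u ((u - v) ⊔ 0) - A v ((u - v) ⊔ 0)

def IsUpperObstacleSolution (A : V → V →ₗ[ℝ] ℝ) (Λ : V →ₗ[ℝ] ℝ) (u z : V) : Prop :=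
  z ≤ u ∧ ∀ w : V, w ≤ u → 0 ≤ A z (w - z) - Λ (w - z)

def IsBilateralObstacleSolution (A : V → V →ₗ[ℝ] ℝ) (L : V →ₗ[ℝ] ℝ) (ψ φ u : V) : Prop :=
  (ψ ≤ u ∧ u ≤ φ) ∧ ∀ v : V, ψ ≤ v → v ≤ φ → 0 ≤ A u (v - u) - L (v - u)

variable [CovariantClass V V (· + ·) (· ≤ ·)] {A : V → V →ₗ[ℝ] ℝ} {L Λ : V →ₗ[ℝ] ℝ}
  {ψ φ u z : V}

namespace IsUpperObstacleSolution

theorem le_of_le_obstacle (hA : IsStrictlyTMonotone A) (hz : IsUpperObstacleSolution A Λ u z)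
    (hψu : ψ ≤ u) (hΛψ : ∀ w : V, 0 ≤ w → A ψ w ≤ Λ w) : ψ ≤ z := by
  by_contra hψz
  have hne : (ψ - z) ⊔ 0 ≠ 0 := fun h => hψz (sub_nonpos.mp (sup_eq_right.mp h))
  have htest := hz.2 (z ⊔ ψ) (sup_le hz.1 hψu)
  rw [sup_sub, sub_self, sup_comm] at htest
  linarith [hΛψ _ (le_sup_right : (0 : V) ≤ (ψ - z) ⊔ 0), hA ψ z hne]

theorem eq_of_isBilateralObstacleSolution (hA : IsStrictlyTMonotone A)
    (hz : IsUpperObstacleSolution A Λ u z) (hu : IsBilateralObstacleSolution A L ψ φ u)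
    (hψz : ψ ≤ z) (hΛL : ∀ w : V, 0 ≤ w → L w ≤ Λ w) : z = u := by
  by_contra hzu
  have huz : 0 ≤ u - z := sub_nonneg.mpr hz.1
  have hpos : (u - z) ⊔ 0 = u - z := sup_eq_left.mpr huz
  have hne : (u - z) ⊔ 0 ≠ 0 := by
    rw [hpos]
    exact sub_ne_zero.mpr (Ne.symm hzu)
  have hmono := hA u z hne
  rw [hpos] at hmono
  have hbilateral := hu.2 z hψz (hz.1.trans hu.1.2)
  rw [← neg_sub u z, map_neg, map_neg] at hbilateral
  linarith [hz.2 u le_rfl, hΛL (u - z) huz]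

theorem apply_le_of_self (hu : IsUpperObstacleSolution A Λ u u) (w : V) (hw : 0 ≤ w) :
    A u w ≤ Λ w := by
  have htest := hu.2 (u - w) (sub_le_self u hw)
  rw [sub_sub_cancel_left, map_neg, map_neg] at htest
  linarith

end IsUpperObstacleSolution

end ObstacleProblem

theorem upper_lewy_stampacchia_general {V : Type*} [Lattice V] [AddCommGroup V] [Module ℝ V]
    [CovariantClass V V (· + ·) (· ≤ ·)]
    (A : V → V →ₗ[ℝ] ℝ)
    (hT : ∀ u v : V, (u - v) ⊔ 0 ≠ 0 → 0 < A u ((u - v) ⊔ 0) - A v ((u - v) ⊔ 0))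
    (ψ φ u : V)
    (L Λ : V →ₗ[ℝ] ℝ)
    (hΛL : ∀ w : V, 0 ≤ w → L w ≤ Λ w)
    (hΛψ : ∀ w : V, 0 ≤ w → A ψ w ≤ Λ w)
    (hu : ψ ≤ u ∧ u ≤ φ)
    (hVI : ∀ v : V, ψ ≤ v → v ≤ φ → 0 ≤ A u (v - u) - L (v - u))
    (haux : ∃! z : V, z ≤ u ∧ ∀ w : V, w ≤ u → 0 ≤ A z (w - z) - Λ (w - z)) :
    ∀ w : V, 0 ≤ w → A u w ≤ Λ w := by
  obtain ⟨z, hz⟩ : ∃ z, IsUpperObstacleSolution A Λ u z := haux.exists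
  have hbilateral : IsBilateralObstacleSolution A L ψ φ u := ⟨hu, hVI⟩
  have hψz : ψ ≤ z := hz.le_of_le_obstacle hT hu.1 hΛψ
  obtain rfl : z = u := hz.eq_of_isBilateralObstacleSolution hT hbilateral hψz hΛL
  exact hz.apply_le_of_self

/-- Upper Lewy–Stampacchia bound in abstract form: if `u` solves the bilateral obstacle
problem on `K_ψ^φ` with forcing `L`, and `Λ ≥ L`, `Λ ≥ Aψ` in the dual order,
then `Au ≤ Λ` in `V'`. -/
theorem upper_lewy_stampacchia {V : Type*} [Lattice V] [AddCommGroup V] [Module ℝ V]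
    [CovariantClass V V (· + ·) (· ≤ ·)]
    (A : V → V →ₗ[ℝ] ℝ)
    (hT : ∀ u v : V, (u - v) ⊔ 0 ≠ 0 → 0 < A u ((u - v) ⊔ 0) - A v ((u - v) ⊔ 0))
    (ψ φ u : V) (hψφ : ψ ≤ φ)
    (L Λ : V →ₗ[ℝ] ℝ)
    (hΛL : ∀ w : V, 0 ≤ w → L w ≤ Λ w)
    (hΛψ : ∀ w : V, 0 ≤ w → A ψ w ≤ Λ w)
    (hu : ψ ≤ u ∧ u ≤ φ)
    (hVI : ∀ v : V, ψ ≤ v → v ≤ φ → 0 ≤ A u (v - u) - L (v - u))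
    (haux : ∃! z : V, z ≤ u ∧ ∀ w : V, w ≤ u → 0 ≤ A z (w - z) - Λ (w - z)) :
    ∀ w : V, 0 ≤ w → A u w ≤ Λ w :=
  upper_lewy_stampacchia_general A hT ψ φ u L Λ hΛL hΛψ hu hVI haux
end

section
/- Suppose A is strictly T-monotone, u solves the bilateral obstacle problem on K_ψ^φ with forcing L, and there exists λ ∈ V' with λ ≤ L and λ ≤ Aφ. Then λ ≤ Au in V'. (Lower Lewy–Stampacchia bound in abstract form.) -/
/-!
Let `z` be the solution of the one-sided problem above `u` with forcing `λ`. Testing its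
inequality with `z ⊓ φ` and using `λ ≤ Aφ`, strict T-monotonicity gives `z ≤ φ`; hence `z` is
admissible for the bilateral problem, and testing the two inequalities against each other
(with `λ ≤ L`) gives `z = u`. The inequality for `z = u` tested with `u + w`, `w ≥ 0`, is then
exactly `λ w ≤ A u w`.
-/

theorem apply_sub_le_of_nonneg_apply_sub_sub {V : Type*} [AddCommGroup V] [Module ℝ V]
    {f g : V →ₗ[ℝ] ℝ} {w z : V} (h : 0 ≤ f (w - z) - g (w - z)) : f (z - w) ≤ g (z - w) := by
  rw [← neg_sub w z, map_neg, map_neg]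
  linarith

theorem sub_self_inf_eq_posPart {V : Type*} [Lattice V] [AddCommGroup V] [AddLeftMono V]
    (z φ : V) : z - z ⊓ φ = (z - φ)⁺ := by
  rw [sub_inf, sub_self, sup_comm, posPart_def]

def StrictTMonotone {V : Type*} [Lattice V] [AddCommGroup V] [Module ℝ V]
    (A : V → V →ₗ[ℝ] ℝ) : Prop :=
  ∀ u v : V, (u - v)⁺ ≠ 0 → 0 < A u (u - v)⁺ - A v (u - v)⁺

section LewyStampacchia

variable {V : Type*} [Lattice V] [AddCommGroup V] [AddLeftMono V] [Module ℝ V]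

theorem StrictTMonotone.le_of_apply_posPart_le {A : V → V →ₗ[ℝ] ℝ} (hA : StrictTMonotone A)
    {u v : V} (h : A u (u - v)⁺ ≤ A v (u - v)⁺) : u ≤ v := by
  by_contra huv
  have hpos : (u - v)⁺ ≠ 0 := fun h0 => huv (sub_nonpos.mp (posPart_eq_zero.mp h0))
  linarith [hA u v hpos]

theorem StrictTMonotone.le_of_obstacle_above {A : V → V →ₗ[ℝ] ℝ} (hA : StrictTMonotone A)
    {lam : V →ₗ[ℝ] ℝ} {u z φ : V} (huφ : u ≤ φ) (hlamφ : ∀ w : V, 0 ≤ w → lam w ≤ A φ w)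
    (huz : u ≤ z) (hz : ∀ w : V, u ≤ w → 0 ≤ A z (w - z) - lam (w - z)) : z ≤ φ := by
  have htest := apply_sub_le_of_nonneg_apply_sub_sub (hz (z ⊓ φ) (le_inf huz huφ))
  rw [sub_self_inf_eq_posPart] at htest
  exact hA.le_of_apply_posPart_le (htest.trans (hlamφ _ (posPart_nonneg _)))

end LewyStampacchia

theorem lower_lewy_stampacchia_general {V : Type*} [Lattice V] [AddCommGroup V] [Module ℝ V]
    [CovariantClass V V (· + ·) (· ≤ ·)]
    (A : V → V →ₗ[ℝ] ℝ)
    (hT : ∀ u v : V, (u - v) ⊔ 0 ≠ 0 → 0 < A u ((u - v) ⊔ 0) - A v ((u - v) ⊔ 0))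
    (ψ φ u : V)
    (L lam : V →ₗ[ℝ] ℝ)
    (hlamL : ∀ w : V, 0 ≤ w → lam w ≤ L w)
    (hlamφ : ∀ w : V, 0 ≤ w → lam w ≤ A φ w)
    (hu : ψ ≤ u ∧ u ≤ φ)
    (hVI : ∀ v : V, ψ ≤ v → v ≤ φ → 0 ≤ A u (v - u) - L (v - u))
    (haux : ∃! z : V, u ≤ z ∧ ∀ w : V, u ≤ w → 0 ≤ A z (w - z) - lam (w - z)) :
    ∀ w : V, 0 ≤ w → lam w ≤ A u w := by
  have hA : StrictTMonotone A := hT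
  obtain ⟨z, ⟨huz, hz⟩, -⟩ := haux
  have hzφ : z ≤ φ := hA.le_of_obstacle_above hu.2 hlamφ huz hz
  have hzu : z ≤ u := by
    apply hA.le_of_apply_posPart_le
    rw [posPart_eq_self.mpr (sub_nonneg.mpr huz)]
    calc A z (z - u) ≤ lam (z - u) := apply_sub_le_of_nonneg_apply_sub_sub (hz u le_rfl)
      _ ≤ L (z - u) := hlamL _ (sub_nonneg.mpr huz)
      _ ≤ A u (z - u) := sub_nonneg.mp (hVI z (hu.1.trans huz) hzφ)
  intro w hw
  have htest := hz (u + w) (le_add_of_nonneg_right hw)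
  rwa [le_antisymm hzu huz, add_sub_cancel_left, sub_nonneg] at htest

/-- Lower Lewy–Stampacchia bound in abstract form: if `u` solves the bilateral obstacle
problem on `K_ψ^φ` with forcing `L`, and `λ ≤ L`, `λ ≤ Aφ` in the dual order,
then `λ ≤ Au` in `V'`. -/
theorem lower_lewy_stampacchia {V : Type*} [Lattice V] [AddCommGroup V] [Module ℝ V]
    [CovariantClass V V (· + ·) (· ≤ ·)]
    (A : V → V →ₗ[ℝ] ℝ)
    (hT : ∀ u v : V, (u - v) ⊔ 0 ≠ 0 → 0 < A u ((u - v) ⊔ 0) - A v ((u - v) ⊔ 0))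
    (ψ φ u : V) (hψφ : ψ ≤ φ)
    (L lam : V →ₗ[ℝ] ℝ)
    (hlamL : ∀ w : V, 0 ≤ w → lam w ≤ L w)
    (hlamφ : ∀ w : V, 0 ≤ w → lam w ≤ A φ w)
    (hu : ψ ≤ u ∧ u ≤ φ)
    (hVI : ∀ v : V, ψ ≤ v → v ≤ φ → 0 ≤ A u (v - u) - L (v - u))
    (haux : ∃! z : V, u ≤ z ∧ ∀ w : V, u ≤ w → 0 ≤ A z (w - z) - lam (w - z)) :
    ∀ w : V, 0 ≤ w → lam w ≤ A u w :=
  lower_lewy_stampacchia_general A hT ψ φ u L lam hlamL hlamφ hu hVI haux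
end

section
/- Let u be the unique solution of the two-obstacle problem on K_ψ^φ and ũ the unique solution of the upper one-obstacle problem on K^φ = {v ∈ V : v ≤ φ}, both with the same forcing L. If Aψ ≤ L in V', then ũ ≥ ψ, hence ũ = u. -/
/-! Test the upper variational inequality with `v = ũ ⊔ ψ ≤ φ`, for which `v - ũ = (ψ - ũ)⁺`:
this gives `⟨Aũ - L, (ψ - ũ)⁺⟩ ≥ 0`, while `Aψ ≤ L` gives `⟨Aψ - L, (ψ - ũ)⁺⟩ ≤ 0`. Hence
`⟨Aψ - Aũ, (ψ - ũ)⁺⟩ ≤ 0`, which strict T-monotonicity only allows when `(ψ - ũ)⁺ = 0`,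
i.e. `ψ ≤ ũ`. Then `ũ ∈ K_ψ^φ ⊆ K^φ` also solves the two-obstacle problem, and uniqueness
gives `ũ = u`. -/

theorem sup_sub_left_eq_sub_sup_zero {V : Type*} [Lattice V] [AddCommGroup V] [AddLeftMono V]
    (a b : V) : a ⊔ b - a = (b - a) ⊔ 0 := by
  rw [sub_eq_add_neg, sup_add, add_neg_cancel, ← sub_eq_add_neg, sup_comm]

theorem le_upper_obstacle_solution_of_subsolution {V : Type*} [Lattice V] [AddCommGroup V] [Module ℝ V]
    [AddLeftMono V] {A : V → V →ₗ[ℝ] ℝ}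
    (hT : ∀ u v : V, (u - v) ⊔ 0 ≠ 0 → 0 < A u ((u - v) ⊔ 0) - A v ((u - v) ⊔ 0))
    {ψ φ : V} (hψφ : ψ ≤ φ) {L : V →ₗ[ℝ] ℝ} {ut : V} (hut : ut ≤ φ)
    (hVIut : ∀ v : V, v ≤ φ → 0 ≤ A ut (v - ut) - L (v - ut))
    (hAψL : ∀ w : V, 0 ≤ w → A ψ w ≤ L w) :
    ψ ≤ ut := by
  have htest : 0 ≤ A ut ((ψ - ut) ⊔ 0) - L ((ψ - ut) ⊔ 0) := by
    simpa only [sup_sub_left_eq_sub_sup_zero] using hVIut (ut ⊔ ψ) (sup_le hut hψφ)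
  have hsub : A ψ ((ψ - ut) ⊔ 0) ≤ L ((ψ - ut) ⊔ 0) := hAψL _ le_sup_right
  by_contra hnot
  have hpos : (ψ - ut) ⊔ 0 ≠ 0 := by
    rwa [Ne, ← posPart_def, posPart_eq_zero, sub_nonpos]
  linarith [hT ψ ut hpos]

/-- If `Aψ ≤ L` in `V'`, then the solution `ũ` of the upper one-obstacle problem on
`K^φ` satisfies `ũ ≥ ψ`, hence it coincides with the solution `u` of the two-obstacle
problem on `K_ψ^φ`. -/
theorem upper_obstacle_eq_bilateral {V : Type*} [Lattice V] [AddCommGroup V] [Module ℝ V]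
    [CovariantClass V V (· + ·) (· ≤ ·)]
    (A : V → V →ₗ[ℝ] ℝ)
    (hT : ∀ u v : V, (u - v) ⊔ 0 ≠ 0 → 0 < A u ((u - v) ⊔ 0) - A v ((u - v) ⊔ 0))
    (ψ φ : V) (hψφ : ψ ≤ φ)
    (L : V →ₗ[ℝ] ℝ)
    (u ut : V)
    (hu : ψ ≤ u ∧ u ≤ φ)
    (hVI : ∀ v : V, ψ ≤ v → v ≤ φ → 0 ≤ A u (v - u) - L (v - u))
    (hut : ut ≤ φ)
    (hVIut : ∀ v : V, v ≤ φ → 0 ≤ A ut (v - ut) - L (v - ut))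
    -- uniqueness of the solution of the two-obstacle problem
    (huniq : ∀ w₁ w₂ : V, (ψ ≤ w₁ ∧ w₁ ≤ φ ∧ ∀ v : V, ψ ≤ v → v ≤ φ → 0 ≤ A w₁ (v - w₁) - L (v - w₁)) →
      (ψ ≤ w₂ ∧ w₂ ≤ φ ∧ ∀ v : V, ψ ≤ v → v ≤ φ → 0 ≤ A w₂ (v - w₂) - L (v - w₂)) → w₁ = w₂)
    (hAψL : ∀ w : V, 0 ≤ w → A ψ w ≤ L w) :
    ψ ≤ ut ∧ ut = u := by
  have hψut : ψ ≤ ut := le_upper_obstacle_solution_of_subsolution hT hψφ hut hVIut hAψL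
  exact ⟨hψut, huniq ut u ⟨hψut, hut, fun v _ hv => hVIut v hv⟩ ⟨hu.1, hu.2, hVI⟩⟩
end
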